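/- arXiv:1606.09510 — 2 statements merged into one kernel-verified Lean document; each statement's English description precedes it below -/
import Mathlib

section
/- Let M ≥ 1, N > 0, and let σ_i² > 0, b_i² ≥ 0 for i = 1,…,M. Define S(γ) = Σ_i [σ_i² b_i² / (σ_i² + Nγ)²]·(γ(√((γ+4)/γ) − 1) − 4) + Σ_i [b_i² / (σ_i² + Nγ)²]·Nγ((√((γ+4)/γ) − 1)γ + 2√((γ+4)/γ) − 4) for γ > 0. Then lim_{γ→0⁺} S(γ) = −4 Σ_i b_i²/σ_i². -/
/-!
Since `γ * √((γ + 4) / γ) = √(γ * (γ + 4))` for `γ > 0`, the function `S` agrees on `(0, ∞)` with an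
expression that is continuous at `0` (the denominators `σᵢ² + Nγ` stay away from `0` near `γ = 0`).
Evaluating that expression at `0` kills the second sum and leaves `-4 ∑ σᵢ² bᵢ² / (σᵢ²)²`.
-/

open Real Filter Topology

theorem Real.mul_sqrt_div_self {x : ℝ} (hx : 0 ≤ x) (y : ℝ) : x * √(y / x) = √(x * y) := by
  rw [sqrt_div' _ hx, sqrt_mul hx, mul_div_left_comm, div_sqrt, mul_comm]

theorem copra_limit_zero_general (M : ℕ) (N : ℝ)
    (σ2 b2 : Fin M → ℝ) (hσ : ∀ i, 0 < σ2 i)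
    (S : ℝ → ℝ)
    (hS : ∀ γ > (0:ℝ), S γ =
      (∑ i, σ2 i * b2 i / (σ2 i + N * γ) ^ 2) *
        (γ * (Real.sqrt ((γ + 4) / γ) - 1) - 4)
      + (∑ i, b2 i / (σ2 i + N * γ) ^ 2) *
        (N * γ * ((Real.sqrt ((γ + 4) / γ) - 1) * γ + 2 * Real.sqrt ((γ + 4) / γ) - 4))) :
    Tendsto S (nhdsWithin 0 (Set.Ioi 0)) (nhds (-4 * ∑ i, b2 i / σ2 i)) := by
  set A : ℝ → ℝ := fun γ => ∑ i, σ2 i * b2 i / (σ2 i + N * γ) ^ 2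
  set B : ℝ → ℝ := fun γ => ∑ i, b2 i / (σ2 i + N * γ) ^ 2
  set g : ℝ → ℝ := fun γ =>
    A γ * (√(γ * (γ + 4)) - γ - 4) + B γ * (N * ((γ + 2) * √(γ * (γ + 4)) - γ * (γ + 4)))
  have hg : ContinuousAt g 0 := by
    fun_prop (disch := simp [(hσ _).ne'])
  have hg0 : g 0 = -4 * ∑ i, b2 i / σ2 i := by
    have hterm (i : Fin M) : σ2 i * b2 i / σ2 i ^ 2 = b2 i / σ2 i := by
      field_simp [(hσ i).ne']
    simp [g, A, hterm]
    ring
  have hSg : S =ᶠ[𝓝[>] 0] g := eventually_nhdsWithin_of_forall fun γ (hγ : 0 < γ) => by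
    have hsqrt := mul_sqrt_div_self hγ.le (γ + 4)
    rw [hS γ hγ]
    linear_combination (A γ + B γ * N * (γ + 2)) * hsqrt
  rw [← hg0]
  exact hg.continuousWithinAt.tendsto.congr' hSg.symm

theorem copra_limit_zero (M : ℕ) (hM : 1 ≤ M) (N : ℝ) (hN : 0 < N)
    (σ2 b2 : Fin M → ℝ) (hσ : ∀ i, 0 < σ2 i) (hb : ∀ i, 0 ≤ b2 i)
    (S : ℝ → ℝ)
    (hS : ∀ γ > (0:ℝ), S γ =
      (∑ i, σ2 i * b2 i / (σ2 i + N * γ) ^ 2) *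
        (γ * (Real.sqrt ((γ + 4) / γ) - 1) - 4)
      + (∑ i, b2 i / (σ2 i + N * γ) ^ 2) *
        (N * γ * ((Real.sqrt ((γ + 4) / γ) - 1) * γ + 2 * Real.sqrt ((γ + 4) / γ) - 4))) :
    Tendsto S (nhdsWithin 0 (Set.Ioi 0)) (nhds (-4 * ∑ i, b2 i / σ2 i)) :=
  copra_limit_zero_general M N σ2 b2 hσ S hS
end

section
/- For each fixed σ² > 0 and N > 0, the function F₁(γ) = [σ²/(σ² + Nγ)²]·(4 + γ − √γ·√(γ+4)) is completely monotone on (0,∞) for n = 0, 1: that is, F₁(γ) ≥ 0 and F₁'(γ) ≤ 0 for all γ > 0. -/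
/-!
`F₁` is the product of `σ²/(σ² + Nγ)²` and `g(γ) = 4 + γ - √γ √(γ+4)`, both nonnegative with
nonpositive derivative, so the product rule gives `F₁' ≤ 0`. For `g` this is AM-GM:
`2 √γ √(γ+4) ≤ γ + (γ + 4)`, which makes `(√γ √(γ+4))' = (2γ + 4) / (2 √γ √(γ+4)) ≥ 1`.
-/

open Real

theorem deriv_mul_nonpos {f g : ℝ → ℝ} {f' g' x : ℝ} (hf : HasDerivAt f f' x)
    (hg : HasDerivAt g g' x) (hf₀ : 0 ≤ f x) (hg₀ : 0 ≤ g x) (hf' : f' ≤ 0) (hg' : g' ≤ 0) :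
    deriv (fun y => f y * g y) x ≤ 0 := by
  rw [(hf.fun_mul hg).deriv]
  exact add_nonpos (mul_nonpos_of_nonpos_of_nonneg hf' hg₀) (mul_nonpos_of_nonneg_of_nonpos hf₀ hg')

theorem hasDerivAt_div_add_mul_sq (a b m : ℝ) {x : ℝ} (hx : b + m * x ≠ 0) :
    HasDerivAt (fun y => a / (b + m * y) ^ 2) (-2 * a * m / (b + m * x) ^ 3) x := by
  have hden : HasDerivAt (fun y => (b + m * y) ^ 2) (2 * (b + m * x) * m) x := by
    simpa using (((hasDerivAt_id x).const_mul m).const_add b).fun_pow 2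
  refine ((hasDerivAt_const x a).fun_div hden (pow_ne_zero 2 hx)).congr_deriv ?_
  field_simp
  ring

section SqrtGap

variable {c x : ℝ}

theorem add_sub_sqrt_mul_sqrt_add_nonneg (hc : 0 ≤ c) (hxc : 0 ≤ x + c) :
    0 ≤ c + x - √x * √(x + c) := by
  have h : √x * √(x + c) ≤ √(x + c) * √(x + c) :=
    mul_le_mul_of_nonneg_right (sqrt_le_sqrt (by linarith)) (sqrt_nonneg _)
  rw [mul_self_sqrt hxc] at h
  linarith

theorem two_mul_sqrt_mul_sqrt_add_le (hx : 0 ≤ x) (hxc : 0 ≤ x + c) :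
    2 * (√x * √(x + c)) ≤ 2 * x + c := by
  have h := two_mul_le_add_sq (√x) (√(x + c))
  rw [sq_sqrt hx, sq_sqrt hxc] at h
  linarith

theorem hasDerivAt_sqrt_mul_sqrt_add (hx : 0 < x) (hxc : 0 < x + c) :
    HasDerivAt (fun y => √y * √(y + c)) ((2 * x + c) / (2 * (√x * √(x + c)))) x := by
  have hs : 0 < √x := sqrt_pos.2 hx
  have ht : 0 < √(x + c) := sqrt_pos.2 hxc
  have hsqrt_add := ((hasDerivAt_id' x).add_const c).sqrt hxc.ne'
  refine ((hasDerivAt_sqrt hx.ne').fun_mul hsqrt_add).congr_deriv ?_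
  field_simp
  rw [sq_sqrt hx.le, sq_sqrt hxc.le]
  ring

theorem hasDerivAt_add_sub_sqrt_mul_sqrt_add (hx : 0 < x) (hxc : 0 < x + c) :
    HasDerivAt (fun y => c + y - √y * √(y + c))
      (1 - (2 * x + c) / (2 * (√x * √(x + c)))) x :=
  ((hasDerivAt_id x).const_add c).sub (hasDerivAt_sqrt_mul_sqrt_add hx hxc)

theorem one_sub_div_two_mul_sqrt_mul_sqrt_add_nonpos (hx : 0 < x) (hxc : 0 < x + c) :
    1 - (2 * x + c) / (2 * (√x * √(x + c))) ≤ 0 := by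
  have hst : 0 < 2 * (√x * √(x + c)) := by
    have := sqrt_pos.2 hx
    have := sqrt_pos.2 hxc
    positivity
  rw [sub_nonpos, one_le_div hst]
  exact two_mul_sqrt_mul_sqrt_add_le hx.le hxc.le

end SqrtGap

theorem F1_completely_monotone_order_one (σ2 N : ℝ) (hσ : 0 < σ2) (hN : 0 < N)
    (F1 : ℝ → ℝ)
    (hF1 : ∀ γ : ℝ, F1 γ =
      σ2 / (σ2 + N * γ) ^ 2 * (4 + γ - Real.sqrt γ * Real.sqrt (γ + 4))) :
    ∀ γ > (0:ℝ), 0 ≤ F1 γ ∧ deriv F1 γ ≤ 0 := by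
  intro γ hγ
  obtain rfl : F1 = fun γ => σ2 / (σ2 + N * γ) ^ 2 * (4 + γ - √γ * √(γ + 4)) := funext hF1
  have hden : 0 < σ2 + N * γ := by positivity
  have hγ4 : 0 < γ + 4 := by linarith
  have hgap : 0 ≤ 4 + γ - √γ * √(γ + 4) := add_sub_sqrt_mul_sqrt_add_nonneg (by norm_num) hγ4.le
  refine ⟨mul_nonneg (by positivity) hgap, ?_⟩
  have hfactor' : -2 * σ2 * N / (σ2 + N * γ) ^ 3 ≤ 0 :=
    div_nonpos_of_nonpos_of_nonneg (by linarith [mul_pos hσ hN]) (by positivity)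
  exact deriv_mul_nonpos (hasDerivAt_div_add_mul_sq σ2 σ2 N hden.ne')
    (hasDerivAt_add_sub_sqrt_mul_sqrt_add hγ hγ4) (by positivity) hgap hfactor'
    (one_sub_div_two_mul_sqrt_mul_sqrt_add_nonpos hγ hγ4)
end
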